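/- arXiv:1710.05892 — 4 statements merged into one kernel-verified Lean document; each statement's English description precedes it below -/
import Mathlib

section
/- Let P ∈ NS be a no-signalling behaviour in the (2,2,2,2) Bell scenario whose CHSH value β := ⟨A₀B₀⟩ + ⟨A₀B₁⟩ + ⟨A₁B₀⟩ − ⟨A₁B₁⟩ satisfies β > 2. Then the visibility of P against white noise equals (β − 2)/β; that is, inf{λ ∈ [0,1] : (1−λ)P + λP₀ ∈ L} = (β − 2)/β, where P₀ is the behaviour with P₀(ab|xy) = 1/4 for all a,b,x,y. -/
open Matrix Kronecker ComplexOrder BigOperators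

/-- A behaviour in the (2,2,2,2) Bell scenario: `P a b x y = P(ab|xy)`. -/
abbrev Behaviour : Type := Fin 2 → Fin 2 → Fin 2 → Fin 2 → ℝ

/-- `P` admits a quantum realisation of local dimension `d`. -/
def HasRealisation (d : ℕ) (P : Behaviour) : Prop :=
  ∃ (ρ : Matrix (Fin d × Fin d) (Fin d × Fin d) ℂ)
    (E F : Fin 2 → Fin 2 → Matrix (Fin d) (Fin d) ℂ),
    ρ.PosSemidef ∧ ρ.trace = 1 ∧
    (∀ x a, (E x a).PosSemidef) ∧ (∀ y b, (F y b).PosSemidef) ∧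
    (∀ x, ∑ a, E x a = 1) ∧ (∀ y, ∑ b, F y b = 1) ∧
    ∀ a b x y, (P a b x y : ℂ) = ((E x a ⊗ₖ F y b) * ρ).trace

def Qfinite : Set Behaviour := {P | ∃ d : ℕ, 0 < d ∧ HasRealisation d P}

def Q : Set Behaviour := closure Qfinite

def detBehaviour (f g : Fin 2 → Fin 2) : Behaviour :=
  fun a b x y => if a = f x ∧ b = g y then 1 else 0

def L : Set Behaviour := convexHull ℝ {P | ∃ f g, P = detBehaviour f g}

def NS : Set Behaviour :=
  {P | (∀ a b x y, 0 ≤ P a b x y) ∧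
       (∀ x y : Fin 2, ∑ a : Fin 2, ∑ b : Fin 2, P a b x y = 1) ∧
       (∀ (a x y y' : Fin 2), ∑ b : Fin 2, P a b x y = ∑ b : Fin 2, P a b x y') ∧
       (∀ (b x x' y : Fin 2), ∑ a : Fin 2, P a b x y = ∑ a : Fin 2, P a b x' y)}

def margA (P : Behaviour) (x : Fin 2) : ℝ :=
  ∑ a : Fin 2, ∑ b : Fin 2, (-1 : ℝ) ^ (a : ℕ) * P a b x 0

def margB (P : Behaviour) (y : Fin 2) : ℝ :=
  ∑ a : Fin 2, ∑ b : Fin 2, (-1 : ℝ) ^ (b : ℕ) * P a b 0 y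

def corr (P : Behaviour) (x y : Fin 2) : ℝ :=
  ∑ a : Fin 2, ∑ b : Fin 2, (-1 : ℝ) ^ ((a : ℕ) + (b : ℕ)) * P a b x y

def chsh (P : Behaviour) : ℝ := corr P 0 0 + corr P 0 1 + corr P 1 0 - corr P 1 1

def bell (B P : Behaviour) : ℝ := ∑ a : Fin 2, ∑ b : Fin 2, ∑ x : Fin 2, ∑ y : Fin 2, B a b x y * P a b x y

noncomputable def beta (B : Behaviour) (S : Set Behaviour) : ℝ := sSup (bell B '' S)

def face (B : Behaviour) (S : Set Behaviour) : Set Behaviour :=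
  {P ∈ S | bell B P = beta B S}

/-- Reconstruct a behaviour from marginals and correlators. -/
noncomputable def fromCorr (mA mB : Fin 2 → ℝ) (c : Fin 2 → Fin 2 → ℝ) : Behaviour :=
  fun a b x y =>
    (1 + (-1 : ℝ) ^ (a : ℕ) * mA x + (-1 : ℝ) ^ (b : ℕ) * mB y
      + (-1 : ℝ) ^ ((a : ℕ) + (b : ℕ)) * c x y) / 4


noncomputable def P0 : Behaviour := fun _ _ _ _ => (1 : ℝ) / 4

/-! Read inputs and outputs in `Fin 2 = ℤ/2ℤ`: the CHSH game is lost on `(a, b | x, y)` when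
`a + b + x * y = 1`, and for a normalised behaviour `chsh P = 4 - 2 · (sum of the four losing
probabilities)`. Every deterministic strategy loses at least one game, so `chsh ≤ 2` on `L`; since
`chsh ((1 - λ) P + λ P₀) = (1 - λ) β`, no `λ < (β - 2)/β` is admissible.

At `λ = (β - 2)/β` the mixture `Q` is no-signalling with `chsh Q = 2`, so its losing probabilities
sum to one. A losing event `(a, b | x, y)` determines a unique deterministic strategy that produces
it and wins the three other games, and no-signalling forces `Q` to be the mixture of these eight
strategies weighted by the losing probabilities; hence `Q ∈ L`. -/

def losingWeight (P : Behaviour) : Fin 2 × Fin 2 × Fin 2 × Fin 2 → ℝ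
  | (a, b, x, y) => if a + b + x * y = 1 then P a b x y else 0

def losingVertex : Fin 2 × Fin 2 × Fin 2 × Fin 2 → Behaviour
  | (a, b, x, y) =>
    detBehaviour (fun x' => if x' = x then a else b + x' * y)
      (fun y' => if y' = y then b else a + x * y')

theorem chsh_eq_four_sub_two_mul_sum_losingWeight (P : Behaviour)
    (hP : ∀ x y : Fin 2, ∑ a : Fin 2, ∑ b : Fin 2, P a b x y = 1) :
    chsh P = 4 - 2 * ∑ i, losingWeight P i := by
  simp only [Fin.sum_univ_two] at hP
  simp [chsh, corr, losingWeight, Fintype.sum_prod_type, Fin.sum_univ_two]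
  linarith [hP 0 0, hP 0 1, hP 1 0, hP 1 1]

theorem eq_sum_losingWeight_smul_losingVertex {P : Behaviour} (hP : P ∈ NS)
    (hloss : ∑ i, losingWeight P i = 1) :
    ∑ i, losingWeight P i • losingVertex i = P := by
  obtain ⟨-, hnorm, hA, hB⟩ := hP
  simp only [Fin.sum_univ_two] at hnorm hA hB
  simp only [losingWeight, Fintype.sum_prod_type, Fin.sum_univ_two, Fin.isValue, Fin.reduceAdd,
    mul_zero, mul_one, add_zero, zero_add, add_eq_right, zero_ne_one, one_ne_zero, ↓reduceIte] at hloss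
  ext a b x y
  simp only [Finset.sum_apply, Pi.smul_apply, smul_eq_mul, Fintype.sum_prod_type, Fin.sum_univ_two,
    losingWeight, losingVertex, detBehaviour]
  fin_cases a <;> fin_cases b <;> fin_cases x <;> fin_cases y <;> simp <;>
    linarith [hnorm 0 0, hnorm 0 1, hnorm 1 0, hnorm 1 1, hA 0 0 0 1, hA 1 0 0 1, hA 0 1 0 1,
      hA 1 1 0 1, hB 0 0 1 0, hB 1 0 1 0, hB 0 0 1 1, hB 1 0 1 1]

theorem losingWeight_nonneg {P : Behaviour} (hP : ∀ a b x y, 0 ≤ P a b x y)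
    (i : Fin 2 × Fin 2 × Fin 2 × Fin 2) :
    0 ≤ losingWeight P i := by
  obtain ⟨a, b, x, y⟩ := i
  dsimp only [losingWeight]
  split_ifs
  exacts [hP a b x y, le_rfl]

theorem mem_L_of_mem_NS_of_chsh_eq_two {P : Behaviour} (hP : P ∈ NS) (h : chsh P = 2) : P ∈ L := by
  have hloss : ∑ i, losingWeight P i = 1 := by
    linarith [chsh_eq_four_sub_two_mul_sum_losingWeight P hP.2.1]
  rw [← eq_sum_losingWeight_smul_losingVertex hP hloss]
  exact (convex_convexHull ℝ _).sum_mem (fun i _ => losingWeight_nonneg hP.1 i) hloss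
    (fun i _ => subset_convexHull ℝ _ ⟨_, _, rfl⟩)

theorem isLinearMap_chsh : IsLinearMap ℝ chsh := by
  constructor <;> intros <;> simp only [chsh, corr, Fin.sum_univ_two, Pi.add_apply, Pi.smul_apply,
    smul_eq_mul] <;> ring

theorem chsh_detBehaviour_le_two (f g : Fin 2 → Fin 2) : chsh (detBehaviour f g) ≤ 2 := by
  simp only [chsh, corr, detBehaviour, Fin.sum_univ_two]
  generalize f 0 = a₀, f 1 = a₁, g 0 = b₀, g 1 = b₁
  fin_cases a₀ <;> fin_cases a₁ <;> fin_cases b₀ <;> fin_cases b₁ <;> norm_num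

theorem chsh_le_two_of_mem_L {P : Behaviour} (hP : P ∈ L) : chsh P ≤ 2 :=
  convexHull_min (by rintro _ ⟨f, g, rfl⟩; exact chsh_detBehaviour_le_two f g)
    (convex_halfSpace_le isLinearMap_chsh 2) hP

theorem convex_NS : Convex ℝ NS := by
  rintro P ⟨hP₀, hP₁, hPA, hPB⟩ Q ⟨hQ₀, hQ₁, hQA, hQB⟩ s t hs ht hst
  refine ⟨fun a b x y => ?_, fun x y => ?_, fun a x y y' => ?_, fun b x x' y => ?_⟩ <;>
    simp only [Pi.add_apply, Pi.smul_apply, smul_eq_mul, Finset.sum_add_distrib, ← Finset.mul_sum]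
  · exact add_nonneg (mul_nonneg hs (hP₀ a b x y)) (mul_nonneg ht (hQ₀ a b x y))
  · rw [hP₁, hQ₁, mul_one, mul_one, hst]
  · rw [hPA a x y y', hQA a x y y']
  · rw [hPB b x x' y, hQB b x x' y]

theorem P0_mem_NS : P0 ∈ NS := by
  refine ⟨fun _ _ _ _ => by norm_num [P0], fun _ _ => by norm_num [P0], fun _ _ _ _ => rfl,
    fun _ _ _ _ => rfl⟩

theorem chsh_P0 : chsh P0 = 0 := by
  simp [chsh, corr, P0, Fin.sum_univ_two]

theorem chsh_mix_P0 (P : Behaviour) (l : ℝ) : chsh ((1 - l) • P + l • P0) = (1 - l) * chsh P := by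
  rw [isLinearMap_chsh.map_add, isLinearMap_chsh.map_smul, isLinearMap_chsh.map_smul, chsh_P0,
    smul_eq_mul, smul_zero, add_zero]

/-- **Visibility against white noise.** For a no-signalling behaviour with CHSH
value `β > 2`, the critical visibility against white noise equals `(β − 2)/β`. -/
theorem visibility_white_noise (P : Behaviour) (hP : P ∈ NS) (hbeta : 2 < chsh P) :
    sInf {l : ℝ | l ∈ Set.Icc (0 : ℝ) 1 ∧ (1 - l) • P + l • P0 ∈ L}
      = (chsh P - 2) / chsh P := by
  have hpos : 0 < chsh P := by linarith
  have hl₀ : 0 ≤ (chsh P - 2) / chsh P := div_nonneg (by linarith) hpos.le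
  have hl₁ : (chsh P - 2) / chsh P ≤ 1 := (div_le_one hpos).2 (by linarith)
  refine IsLeast.csInf_eq ⟨⟨⟨hl₀, hl₁⟩, mem_L_of_mem_NS_of_chsh_eq_two ?_ ?_⟩, ?_⟩
  · exact convex_NS hP P0_mem_NS (sub_nonneg.2 hl₁) hl₀ (sub_add_cancel 1 _)
  · rw [chsh_mix_P0]
    field_simp
    ring
  · rintro l ⟨-, hl⟩
    have hlocal := chsh_le_two_of_mem_L hl
    rw [chsh_mix_P0] at hlocal
    rw [div_le_iff₀ hpos]
    linarith
end

section
/- Let P ∈ NS be a no-signalling behaviour in the (2,2,2,2) Bell scenario whose CHSH value β := ⟨A₀B₀⟩ + ⟨A₀B₁⟩ + ⟨A₁B₀⟩ − ⟨A₁B₁⟩ satisfies β > 2. Then the visibility of P against local noise equals (β − 2)/(β + 2); that is, inf{λ ∈ [0,1] : ∃ P_noise ∈ L such that (1−λ)P + λP_noise ∈ L} = (β − 2)/(β + 2). -/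
open Matrix Kronecker ComplexOrder BigOperators

lemma corr_expand (M : Behaviour) (x y : Fin 2) :
    corr M x y = M 0 0 x y - M 0 1 x y - M 1 0 x y + M 1 1 x y := by
  simp [corr, Fin.sum_univ_two]
  ring

lemma fin2 (i : Fin 2) : i = 0 ∨ i = 1 := by omega

lemma cell {r0 r1 v : ℝ} (h0 : 0 ≤ r0) (h1 : 0 ≤ r1) (h0v : r0 ≤ v) (h1v : r1 ≤ v) :
    ∃ q00 q01 q10 q11 : ℝ, 0 ≤ q00 ∧ 0 ≤ q01 ∧ 0 ≤ q10 ∧ 0 ≤ q11 ∧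
      q00 + q01 = r0 ∧ q00 + q10 = r1 ∧ q00 + q01 + q10 + q11 = v := by
  rcases le_total r0 r1 with h | h
  · exact ⟨r0, 0, r1 - r0, v - r1, h0, le_refl 0, by linarith, by linarith, by ring, by ring, by ring⟩
  · exact ⟨r1, r0 - r1, 0, v - r0, h1, by linarith, le_refl 0, by linarith, by ring, by ring, by ring⟩

lemma mem_L_of_weights (M : Behaviour) (q : Fin 2 → Fin 2 → Fin 2 → Fin 2 → ℝ)
    (hq : ∀ a0 a1 c d, 0 ≤ q a0 a1 c d)
    (hsum : (∑ i : Fin 2 × Fin 2 × Fin 2 × Fin 2, q i.1 i.2.1 i.2.2.1 i.2.2.2) = 1)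
    (hcoord : ∀ a b x y, M a b x y = ∑ i : Fin 2 × Fin 2 × Fin 2 × Fin 2,
       q i.1 i.2.1 i.2.2.1 i.2.2.2 * (detBehaviour ![i.1, i.2.1] ![i.2.2.1, i.2.2.2]) a b x y) :
    M ∈ L := by
  have hkey : Finset.univ.centerMass (fun i : Fin 2 × Fin 2 × Fin 2 × Fin 2 => q i.1 i.2.1 i.2.2.1 i.2.2.2)
      (fun i => detBehaviour ![i.1, i.2.1] ![i.2.2.1, i.2.2.2]) = M := by
    rw [Finset.centerMass_eq_of_sum_1 _ _ hsum]
    funext a b x y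
    rw [show (∑ i : Fin 2 × Fin 2 × Fin 2 × Fin 2, q i.1 i.2.1 i.2.2.1 i.2.2.2 • detBehaviour ![i.1, i.2.1] ![i.2.2.1, i.2.2.2]) a b x y
      = ∑ i : Fin 2 × Fin 2 × Fin 2 × Fin 2, q i.1 i.2.1 i.2.2.1 i.2.2.2 * (detBehaviour ![i.1, i.2.1] ![i.2.2.1, i.2.2.2]) a b x y by
        simp [Finset.sum_apply, Pi.smul_apply]]
    exact (hcoord a b x y).symm
  rw [← hkey]
  exact Finset.centerMass_mem_convexHull _ (fun i _ => hq _ _ _ _) (by rw [hsum]; norm_num)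
    (fun i _ => ⟨_, _, rfl⟩)

set_option maxHeartbeats 4000000 in
lemma fine (M : Behaviour)
    (hpos : ∀ a b x y, 0 ≤ M a b x y)
    (hnorm : ∀ x y : Fin 2, M 0 0 x y + M 0 1 x y + M 1 0 x y + M 1 1 x y = 1)
    (hA : ∀ a x : Fin 2, M a 0 x 0 + M a 1 x 0 = M a 0 x 1 + M a 1 x 1)
    (hB : ∀ b y : Fin 2, M 0 b 0 y + M 1 b 0 y = M 0 b 1 y + M 1 b 1 y)
    (hS1 : corr M 0 0 + corr M 0 1 + corr M 1 0 - corr M 1 1 ≤ 2)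
    (hS2 : corr M 0 0 + corr M 0 1 - corr M 1 0 + corr M 1 1 ≤ 2)
    (hS3 : corr M 0 0 - corr M 0 1 + corr M 1 0 + corr M 1 1 ≤ 2)
    (hS4 : -corr M 0 0 + corr M 0 1 + corr M 1 0 + corr M 1 1 ≤ 2)
    (hT1 : -2 ≤ corr M 0 0 + corr M 0 1 + corr M 1 0 - corr M 1 1)
    (hT2 : -2 ≤ corr M 0 0 + corr M 0 1 - corr M 1 0 + corr M 1 1)
    (hT3 : -2 ≤ corr M 0 0 - corr M 0 1 + corr M 1 0 + corr M 1 1)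
    (hT4 : -2 ≤ -corr M 0 0 + corr M 0 1 + corr M 1 0 + corr M 1 1) :
    M ∈ L := by
  simp only [corr_expand] at hS1 hS2 hS3 hS4 hT1 hT2 hT3 hT4
  have hp0000 : 0 ≤ M 0 0 0 0 := hpos 0 0 0 0
  have hp0001 : 0 ≤ M 0 0 0 1 := hpos 0 0 0 1
  have hp0010 : 0 ≤ M 0 0 1 0 := hpos 0 0 1 0
  have hp0011 : 0 ≤ M 0 0 1 1 := hpos 0 0 1 1
  have hp0100 : 0 ≤ M 0 1 0 0 := hpos 0 1 0 0
  have hp0101 : 0 ≤ M 0 1 0 1 := hpos 0 1 0 1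
  have hp0110 : 0 ≤ M 0 1 1 0 := hpos 0 1 1 0
  have hp0111 : 0 ≤ M 0 1 1 1 := hpos 0 1 1 1
  have hp1000 : 0 ≤ M 1 0 0 0 := hpos 1 0 0 0
  have hp1001 : 0 ≤ M 1 0 0 1 := hpos 1 0 0 1
  have hp1010 : 0 ≤ M 1 0 1 0 := hpos 1 0 1 0
  have hp1011 : 0 ≤ M 1 0 1 1 := hpos 1 0 1 1
  have hp1100 : 0 ≤ M 1 1 0 0 := hpos 1 1 0 0
  have hp1101 : 0 ≤ M 1 1 0 1 := hpos 1 1 0 1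
  have hp1110 : 0 ≤ M 1 1 1 0 := hpos 1 1 1 0
  have hp1111 : 0 ≤ M 1 1 1 1 := hpos 1 1 1 1
  have hn00 := hnorm 0 0
  have hn01 := hnorm 0 1
  have hn10 := hnorm 1 0
  have hn11 := hnorm 1 1
  have hA00 := hA 0 0
  have hA01 := hA 0 1
  have hA10 := hA 1 0
  have hA11 := hA 1 1
  have hB00 := hB 0 0
  have hB01 := hB 0 1
  have hB10 := hB 1 0
  have hB11 := hB 1 1
  obtain ⟨s, hsl1, hsl2, hsl3, hsl4, hsl5, hsl6, hsu1, hsu2, hsu3, hsu4, hsu5, hsu6⟩ :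
      ∃ s : ℝ, ((0:ℝ) ≤ s) ∧ (((M 0 0 0 0 + M 1 0 0 0) + (M 0 0 0 1 + M 1 0 0 1) - 1) ≤ s) ∧ ((M 0 0 0 0 + M 0 0 0 1 - (M 0 0 0 0 + M 0 1 0 0)) ≤ s) ∧ ((M 0 0 1 0 + M 0 0 1 1 - (M 0 0 1 0 + M 0 1 1 0)) ≤ s) ∧ (((M 0 0 0 0 + M 0 1 0 0) - M 0 0 0 0 - M 0 0 0 1 + (M 0 0 0 0 + M 1 0 0 0) + (M 0 0 0 1 + M 1 0 0 1) - 1) ≤ s) ∧ (((M 0 0 1 0 + M 0 1 1 0) - M 0 0 1 0 - M 0 0 1 1 + (M 0 0 0 0 + M 1 0 0 0) + (M 0 0 0 1 + M 1 0 0 1) - 1) ≤ s) ∧ (s ≤ (M 0 0 0 0 + M 1 0 0 0)) ∧ (s ≤ (M 0 0 0 1 + M 1 0 0 1)) ∧ (s ≤ (M 0 0 0 1 - M 0 0 0 0 + (M 0 0 0 0 + M 1 0 0 0))) ∧ (s ≤ (M 0 0 1 1 - M 0 0 1 0 + (M 0 0 0 0 + M 1 0 0 0))) ∧ (s ≤ (M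 0 0 0 0 - M 0 0 0 1 + (M 0 0 0 1 + M 1 0 0 1))) ∧ (s ≤ (M 0 0 1 0 - M 0 0 1 1 + (M 0 0 0 1 + M 1 0 0 1))) := by
    refine ⟨max (0:ℝ) (max ((M 0 0 0 0 + M 1 0 0 0) + (M 0 0 0 1 + M 1 0 0 1) - 1) (max (M 0 0 0 0 + M 0 0 0 1 - (M 0 0 0 0 + M 0 1 0 0)) (max (M 0 0 1 0 + M 0 0 1 1 - (M 0 0 1 0 + M 0 1 1 0)) (max ((M 0 0 0 0 + M 0 1 0 0) - M 0 0 0 0 - M 0 0 0 1 + (M 0 0 0 0 + M 1 0 0 0) + (M 0 0 0 1 + M 1 0 0 1) - 1) ((M 0 0 1 0 + M 0 1 1 0) - M 0 0 1 0 - M 0 0 1 1 + (M 0 0 0 0 + M 1 0 0 0) + (M 0 0 0 1 + M 1 0 0 1) - 1))))), ?_, ?_, ?_, ?_, ?_, ?_, ?_, ?_, ?_, ?_, ?_, ?_⟩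
    · exact le_max_left _ _
    · exact le_trans (le_max_left _ _) (le_max_right _ _)
    · exact le_trans (le_trans (le_max_left _ _) (le_max_right _ _)) (le_max_right _ _)
    · exact le_trans (le_trans (le_trans (le_max_left _ _) (le_max_right _ _)) (le_max_right _ _)) (le_max_right _ _)
    · exact le_trans (le_trans (le_trans (le_trans (le_max_left _ _) (le_max_right _ _)) (le_max_right _ _)) (le_max_right _ _)) (le_max_right _ _)
    · exact le_trans (le_trans (le_trans (le_trans (le_max_right _ _) (le_max_right _ _)) (le_max_right _ _)) (le_max_right _ _)) (le_max_right _ _)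
    · exact max_le (by linarith) (max_le (by linarith) (max_le (by linarith) (max_le (by linarith) (max_le (by linarith) (by linarith)))))
    · exact max_le (by linarith) (max_le (by linarith) (max_le (by linarith) (max_le (by linarith) (max_le (by linarith) (by linarith)))))
    · exact max_le (by linarith) (max_le (by linarith) (max_le (by linarith) (max_le (by linarith) (max_le (by linarith) (by linarith)))))
    · exact max_le (by linarith) (max_le (by linarith) (max_le (by linarith) (max_le (by linarith) (max_le (by linarith) (by linarith)))))
    · exact max_le (by linarith) (max_le (by linarith) (max_le (by linarith) (max_le (by linarith) (max_le (by linarith) (by linarith)))))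
    · exact max_le (by linarith) (max_le (by linarith) (max_le (by linarith) (max_le (by linarith) (max_le (by linarith) (by linarith)))))
  obtain ⟨t0, ht0l1, ht0l2, ht0l3, ht0l4, ht0u1, ht0u2, ht0u3, ht0u4⟩ :
      ∃ t : ℝ, ((0:ℝ) ≤ t) ∧ ((M 0 0 0 0 + M 0 0 0 1 - (M 0 0 0 0 + M 0 1 0 0)) ≤ t) ∧ ((M 0 0 0 0 - (M 0 0 0 0 + M 1 0 0 0) + s) ≤ t) ∧ ((M 0 0 0 1 - (M 0 0 0 1 + M 1 0 0 1) + s) ≤ t) ∧ (t ≤ s) ∧ (t ≤ M 0 0 0 0) ∧ (t ≤ M 0 0 0 1) ∧ (t ≤ (1 - (M 0 0 0 0 + M 1 0 0 0) - (M 0 0 0 1 + M 1 0 0 1) + s - (M 0 0 0 0 + M 0 1 0 0) + M 0 0 0 0 + M 0 0 0 1)) := by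
    refine ⟨max (0:ℝ) (max (M 0 0 0 0 + M 0 0 0 1 - (M 0 0 0 0 + M 0 1 0 0)) (max (M 0 0 0 0 - (M 0 0 0 0 + M 1 0 0 0) + s) (M 0 0 0 1 - (M 0 0 0 1 + M 1 0 0 1) + s))), ?_, ?_, ?_, ?_, ?_, ?_, ?_, ?_⟩
    · exact le_max_left _ _
    · exact le_trans (le_max_left _ _) (le_max_right _ _)
    · exact le_trans (le_trans (le_max_left _ _) (le_max_right _ _)) (le_max_right _ _)
    · exact le_trans (le_trans (le_max_right _ _) (le_max_right _ _)) (le_max_right _ _)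
    · exact max_le (by linarith) (max_le (by linarith) (max_le (by linarith) (by linarith)))
    · exact max_le (by linarith) (max_le (by linarith) (max_le (by linarith) (by linarith)))
    · exact max_le (by linarith) (max_le (by linarith) (max_le (by linarith) (by linarith)))
    · exact max_le (by linarith) (max_le (by linarith) (max_le (by linarith) (by linarith)))
  obtain ⟨t1, ht1l1, ht1l2, ht1l3, ht1l4, ht1u1, ht1u2, ht1u3, ht1u4⟩ :
      ∃ t : ℝ, ((0:ℝ) ≤ t) ∧ ((M 0 0 1 0 + M 0 0 1 1 - (M 0 0 1 0 + M 0 1 1 0)) ≤ t) ∧ ((M 0 0 1 0 - (M 0 0 0 0 + M 1 0 0 0) + s) ≤ t) ∧ ((M 0 0 1 1 - (M 0 0 0 1 + M 1 0 0 1) + s) ≤ t) ∧ (t ≤ s) ∧ (t ≤ M 0 0 1 0) ∧ (t ≤ M 0 0 1 1) ∧ (t ≤ (1 - (M 0 0 0 0 + M 1 0 0 0) - (M 0 0 0 1 + M 1 0 0 1) + s - (M 0 0 1 0 + M 0 1 1 0) + M 0 0 1 0 + M 0 0 1 1)) := by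
    refine ⟨max (0:ℝ) (max (M 0 0 1 0 + M 0 0 1 1 - (M 0 0 1 0 + M 0 1 1 0)) (max (M 0 0 1 0 - (M 0 0 0 0 + M 1 0 0 0) + s) (M 0 0 1 1 - (M 0 0 0 1 + M 1 0 0 1) + s))), ?_, ?_, ?_, ?_, ?_, ?_, ?_, ?_⟩
    · exact le_max_left _ _
    · exact le_trans (le_max_left _ _) (le_max_right _ _)
    · exact le_trans (le_trans (le_max_left _ _) (le_max_right _ _)) (le_max_right _ _)
    · exact le_trans (le_trans (le_max_right _ _) (le_max_right _ _)) (le_max_right _ _)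
    · exact max_le (by linarith) (max_le (by linarith) (max_le (by linarith) (by linarith)))
    · exact max_le (by linarith) (max_le (by linarith) (max_le (by linarith) (by linarith)))
    · exact max_le (by linarith) (max_le (by linarith) (max_le (by linarith) (by linarith)))
    · exact max_le (by linarith) (max_le (by linarith) (max_le (by linarith) (by linarith)))
  obtain ⟨q00c00, q01c00, q10c00, q11c00, hq00c00, hq01c00, hq10c00, hq11c00, he0c00, he1c00, hevc00⟩ :=
    cell (r0 := t0) (r1 := t1) (v := s)
      (by linarith) (by linarith) (by linarith) (by linarith)
  obtain ⟨q00c01, q01c01, q10c01, q11c01, hq00c01, hq01c01, hq10c01, hq11c01, he0c01, he1c01, hevc01⟩ :=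
    cell (r0 := (M 0 0 0 0 - t0)) (r1 := (M 0 0 1 0 - t1)) (v := ((M 0 0 0 0 + M 1 0 0 0) - s))
      (by linarith) (by linarith) (by linarith) (by linarith)
  obtain ⟨q00c10, q01c10, q10c10, q11c10, hq00c10, hq01c10, hq10c10, hq11c10, he0c10, he1c10, hevc10⟩ :=
    cell (r0 := (M 0 0 0 1 - t0)) (r1 := (M 0 0 1 1 - t1)) (v := ((M 0 0 0 1 + M 1 0 0 1) - s))
      (by linarith) (by linarith) (by linarith) (by linarith)
  obtain ⟨q00c11, q01c11, q10c11, q11c11, hq00c11, hq01c11, hq10c11, hq11c11, he0c11, he1c11, hevc11⟩ :=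
    cell (r0 := ((M 0 0 0 0 + M 0 1 0 0) - M 0 0 0 0 - M 0 0 0 1 + t0)) (r1 := ((M 0 0 1 0 + M 0 1 1 0) - M 0 0 1 0 - M 0 0 1 1 + t1)) (v := (1 - (M 0 0 0 0 + M 1 0 0 0) - (M 0 0 0 1 + M 1 0 0 1) + s))
      (by linarith) (by linarith) (by linarith) (by linarith)
  apply mem_L_of_weights M (fun a0 a1 c d => ![![![![q00c00, q00c01], ![q00c10, q00c11]], ![![q01c00, q01c01], ![q01c10, q01c11]]], ![![![q10c00, q10c01], ![q10c10, q10c11]], ![![q11c00, q11c01], ![q11c10, q11c11]]]] a0 a1 c d)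
  · rintro a0 a1 c d
    fin_cases a0 <;> fin_cases a1 <;> fin_cases c <;> fin_cases d <;>
      simp only [Matrix.cons_val_zero, Matrix.cons_val_one, Matrix.head_cons] <;> assumption
  · simp only [Fintype.sum_prod_type, Fin.sum_univ_two, Matrix.cons_val_zero,
      Matrix.cons_val_one, Matrix.head_cons]
    linarith
  · intro a b x y
    fin_cases a <;> fin_cases b <;> fin_cases x <;> fin_cases y <;>
      · simp only [Fintype.sum_prod_type, Fin.sum_univ_two, detBehaviour, Matrix.cons_val_zero,
          Matrix.cons_val_one, Matrix.head_cons]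
        norm_num
        linarith

lemma chsh_comb (X Y : Behaviour) (a b : ℝ) :
    chsh (a • X + b • Y) = a * chsh X + b * chsh Y := by
  simp only [chsh, corr_expand, Pi.add_apply, Pi.smul_apply, smul_eq_mul]
  ring

lemma chsh_det_bounds (f g : Fin 2 → Fin 2) :
    -2 ≤ chsh (detBehaviour f g) ∧ chsh (detBehaviour f g) ≤ 2 := by
  rcases fin2 (f 0) with h0 | h0 <;> rcases fin2 (f 1) with h1 | h1 <;>
    rcases fin2 (g 0) with h2 | h2 <;> rcases fin2 (g 1) with h3 | h3 <;>
      constructor <;>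
        simp [chsh, corr_expand, detBehaviour, h0, h1, h2, h3] <;> norm_num

lemma chsh_mem_L_bounds (Q : Behaviour) (hQ : Q ∈ L) : -2 ≤ chsh Q ∧ chsh Q ≤ 2 := by
  have hconv : Convex ℝ {Q : Behaviour | -2 ≤ chsh Q ∧ chsh Q ≤ 2} := by
    rintro X ⟨hX1, hX2⟩ Y ⟨hY1, hY2⟩ a b ha hb hab
    have hlin := chsh_comb X Y a b
    constructor
    · simp only [Set.mem_setOf_eq, hlin]
      nlinarith [mul_nonneg ha (by linarith : (0:ℝ) ≤ chsh X + 2),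
        mul_nonneg hb (by linarith : (0:ℝ) ≤ chsh Y + 2)]
    · simp only [Set.mem_setOf_eq, hlin]
      nlinarith [mul_nonneg ha (by linarith : (0:ℝ) ≤ 2 - chsh X),
        mul_nonneg hb (by linarith : (0:ℝ) ≤ 2 - chsh Y)]
  exact convexHull_min (by rintro D ⟨f, g, rfl⟩; exact chsh_det_bounds f g) hconv hQ

set_option maxHeartbeats 4000000 in
/-- **Visibility against local noise.** For a no-signalling behaviour with CHSH
value `β > 2`, the critical visibility against local noise equals `(β − 2)/(β + 2)`. -/
theorem visibility_local_noise (P : Behaviour) (hP : P ∈ NS) (hbeta : 2 < chsh P) :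
    sInf {l : ℝ | l ∈ Set.Icc (0 : ℝ) 1 ∧ ∃ Pnoise ∈ L, (1 - l) • P + l • Pnoise ∈ L}
      = (chsh P - 2) / (chsh P + 2) := by
  obtain ⟨hPpos, hPnorm, hPA, hPB⟩ := hP
  have hPnorm' : ∀ x y : Fin 2, P 0 0 x y + P 0 1 x y + P 1 0 x y + P 1 1 x y = 1 := by
    intro x y; have h := hPnorm x y; simp [Fin.sum_univ_two] at h; linarith
  have hPA' : ∀ a x : Fin 2, P a 0 x 0 + P a 1 x 0 = P a 0 x 1 + P a 1 x 1 := by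
    intro a x; have h := hPA a x 0 1; simp [Fin.sum_univ_two] at h; linarith
  have hPB' : ∀ b y : Fin 2, P 0 b 0 y + P 1 b 0 y = P 0 b 1 y + P 1 b 1 y := by
    intro b y; have h := hPB b 0 1 y; simp [Fin.sum_univ_two] at h; linarith
  set β := chsh P with hβ
  have h2 : (0:ℝ) < β + 2 := by linarith
  set lam := (β - 2) / (β + 2) with hlam
  have hl0 : 0 ≤ lam := div_nonneg (by linarith) (by linarith)
  have hl1 : lam ≤ 1 := by rw [hlam, div_le_one h2]; linarith
  have hkeyl : lam * (β + 2) = β - 2 := by rw [hlam]; field_simp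
  have hch : β = corr P 0 0 + corr P 0 1 + corr P 1 0 - corr P 1 1 := rfl
  -- correlator bounds for P
  have hcub : ∀ x y : Fin 2, corr P x y ≤ 1 ∧ -1 ≤ corr P x y := by
    intro x y; rw [corr_expand]
    constructor <;>
      linarith [hPpos 0 0 x y, hPpos 0 1 x y, hPpos 1 0 x y, hPpos 1 1 x y, hPnorm' x y]
  set N := detBehaviour ![1, 0] ![0, 0] with hN
  have hNval : ∀ a b x y : Fin 2, N a b x y = if a = ![1,0] x ∧ b = ![0,0] y then 1 else 0 := by
    intro a b x y
    rw [hN]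
    rfl
  have hcorrN : corr N 0 0 = -1 ∧ corr N 0 1 = -1 ∧ corr N 1 0 = 1 ∧ corr N 1 1 = 1 := by
    refine ⟨?_, ?_, ?_, ?_⟩ <;>
      · rw [corr_expand, hNval, hNval, hNval, hNval]
        norm_num [Matrix.cons_val_zero, Matrix.cons_val_one, Matrix.head_cons]
  obtain ⟨hcN1, hcN2, hcN3, hcN4⟩ := hcorrN
  set M := (1 - lam) • P + lam • N with hM
  have hMent : ∀ a b x y : Fin 2, M a b x y = (1 - lam) * P a b x y + lam * N a b x y := by
    intro a b x y; rw [hM]; simp [Pi.add_apply, Pi.smul_apply, smul_eq_mul]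
  have hcorrM : ∀ x y : Fin 2, corr M x y = (1 - lam) * corr P x y + lam * corr N x y := by
    intro x y
    rw [corr_expand, corr_expand, corr_expand, hMent, hMent, hMent, hMent]
    ring
  -- fine hypotheses for M
  have hMpos : ∀ a b x y : Fin 2, 0 ≤ M a b x y := by
    intro a b x y
    rw [hMent]
    have hN0 : (0:ℝ) ≤ N a b x y := by rw [hNval]; split <;> norm_num
    exact add_nonneg (mul_nonneg (by linarith) (hPpos a b x y)) (mul_nonneg hl0 hN0)
  have hMnorm : ∀ x y : Fin 2, M 0 0 x y + M 0 1 x y + M 1 0 x y + M 1 1 x y = 1 := by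
    intro x y
    rw [hMent, hMent, hMent, hMent]
    fin_cases x <;> fin_cases y
    · rw [hNval, hNval, hNval, hNval]; norm_num [Matrix.cons_val_zero, Matrix.cons_val_one, Matrix.head_cons]; linear_combination (1 - lam) * hPnorm' 0 0
    · rw [hNval, hNval, hNval, hNval]; norm_num [Matrix.cons_val_zero, Matrix.cons_val_one, Matrix.head_cons]; linear_combination (1 - lam) * hPnorm' 0 1
    · rw [hNval, hNval, hNval, hNval]; norm_num [Matrix.cons_val_zero, Matrix.cons_val_one, Matrix.head_cons]; linear_combination (1 - lam) * hPnorm' 1 0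
    · rw [hNval, hNval, hNval, hNval]; norm_num [Matrix.cons_val_zero, Matrix.cons_val_one, Matrix.head_cons]; linear_combination (1 - lam) * hPnorm' 1 1
  have hMA : ∀ a x : Fin 2, M a 0 x 0 + M a 1 x 0 = M a 0 x 1 + M a 1 x 1 := by
    intro a x
    rw [hMent, hMent, hMent, hMent]
    fin_cases a <;> fin_cases x
    · rw [hNval, hNval, hNval, hNval]; norm_num [Matrix.cons_val_zero, Matrix.cons_val_one, Matrix.head_cons]; linear_combination (1 - lam) * hPA' 0 0
    · rw [hNval, hNval, hNval, hNval]; norm_num [Matrix.cons_val_zero, Matrix.cons_val_one, Matrix.head_cons]; linear_combination (1 - lam) * hPA' 0 1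
    · rw [hNval, hNval, hNval, hNval]; norm_num [Matrix.cons_val_zero, Matrix.cons_val_one, Matrix.head_cons]; linear_combination (1 - lam) * hPA' 1 0
    · rw [hNval, hNval, hNval, hNval]; norm_num [Matrix.cons_val_zero, Matrix.cons_val_one, Matrix.head_cons]; linear_combination (1 - lam) * hPA' 1 1
  have hMB : ∀ b y : Fin 2, M 0 b 0 y + M 1 b 0 y = M 0 b 1 y + M 1 b 1 y := by
    intro b y
    rw [hMent, hMent, hMent, hMent]
    fin_cases b <;> fin_cases y
    · rw [hNval, hNval, hNval, hNval]; norm_num [Matrix.cons_val_zero, Matrix.cons_val_one, Matrix.head_cons]; linear_combination (1 - lam) * hPB' 0 0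
    · rw [hNval, hNval, hNval, hNval]; norm_num [Matrix.cons_val_zero, Matrix.cons_val_one, Matrix.head_cons]; linear_combination (1 - lam) * hPB' 0 1
    · rw [hNval, hNval, hNval, hNval]; norm_num [Matrix.cons_val_zero, Matrix.cons_val_one, Matrix.head_cons]; linear_combination (1 - lam) * hPB' 1 0
    · rw [hNval, hNval, hNval, hNval]; norm_num [Matrix.cons_val_zero, Matrix.cons_val_one, Matrix.head_cons]; linear_combination (1 - lam) * hPB' 1 1
  -- mixing bound
  have hmix : ∀ sP sN : ℝ, sP ≤ 4 - β → sN ≤ 2 → (1 - lam) * sP + lam * sN ≤ 2 := by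
    intro sP sN hsP hsN
    nlinarith [mul_nonneg (by linarith : (0:ℝ) ≤ 1 - lam) (by linarith : (0:ℝ) ≤ 4 - β - sP),
      mul_nonneg hl0 (by linarith : (0:ℝ) ≤ 2 - sN), hkeyl]
  have hkey2 : (1 - lam) * β - 2 * lam = 2 := by nlinarith [hkeyl]
  have hS1M : corr M 0 0 + corr M 0 1 + corr M 1 0 - corr M 1 1 = 2 := by
    rw [hcorrM, hcorrM, hcorrM, hcorrM, hcN1, hcN2, hcN3, hcN4]
    have : (1 - lam) * (corr P 0 0 + corr P 0 1 + corr P 1 0 - corr P 1 1) - 2 * lam = 2 := by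
      rw [← hch]; exact hkey2
    linarith [this]
  obtain ⟨hc00u, hc00l⟩ := hcub 0 0
  obtain ⟨hc01u, hc01l⟩ := hcub 0 1
  obtain ⟨hc10u, hc10l⟩ := hcub 1 0
  obtain ⟨hc11u, hc11l⟩ := hcub 1 1
  have hchc : corr P 0 0 + corr P 0 1 + corr P 1 0 - corr P 1 1 = β := hch.symm
  have hS2M : corr M 0 0 + corr M 0 1 - corr M 1 0 + corr M 1 1 ≤ 2 := by
    rw [hcorrM, hcorrM, hcorrM, hcorrM, hcN1, hcN2, hcN3, hcN4]
    have hb : corr P 0 0 + corr P 0 1 - corr P 1 0 + corr P 1 1 ≤ 4 - β := by linarith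
    have := hmix _ (-2) hb (by norm_num)
    linarith [this]
  have hS3M : corr M 0 0 - corr M 0 1 + corr M 1 0 + corr M 1 1 ≤ 2 := by
    rw [hcorrM, hcorrM, hcorrM, hcorrM, hcN1, hcN2, hcN3, hcN4]
    have hb : corr P 0 0 - corr P 0 1 + corr P 1 0 + corr P 1 1 ≤ 4 - β := by linarith
    have := hmix _ 2 hb (by norm_num)
    linarith [this]
  have hS4M : -corr M 0 0 + corr M 0 1 + corr M 1 0 + corr M 1 1 ≤ 2 := by
    rw [hcorrM, hcorrM, hcorrM, hcorrM, hcN1, hcN2, hcN3, hcN4]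
    have hb : -corr P 0 0 + corr P 0 1 + corr P 1 0 + corr P 1 1 ≤ 4 - β := by linarith
    have := hmix _ 2 hb (by norm_num)
    linarith [this]
  have hT2M : -2 ≤ corr M 0 0 + corr M 0 1 - corr M 1 0 + corr M 1 1 := by
    rw [hcorrM, hcorrM, hcorrM, hcorrM, hcN1, hcN2, hcN3, hcN4]
    have hb : -(corr P 0 0 + corr P 0 1 - corr P 1 0 + corr P 1 1) ≤ 4 - β := by linarith
    have := hmix _ 2 hb (by norm_num)
    linarith [this]
  have hT3M : -2 ≤ corr M 0 0 - corr M 0 1 + corr M 1 0 + corr M 1 1 := by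
    rw [hcorrM, hcorrM, hcorrM, hcorrM, hcN1, hcN2, hcN3, hcN4]
    have hb : -(corr P 0 0 - corr P 0 1 + corr P 1 0 + corr P 1 1) ≤ 4 - β := by linarith
    have := hmix _ (-2) hb (by norm_num)
    linarith [this]
  have hT4M : -2 ≤ -corr M 0 0 + corr M 0 1 + corr M 1 0 + corr M 1 1 := by
    rw [hcorrM, hcorrM, hcorrM, hcorrM, hcN1, hcN2, hcN3, hcN4]
    have hb : -(-corr P 0 0 + corr P 0 1 + corr P 1 0 + corr P 1 1) ≤ 4 - β := by linarith
    have := hmix _ (-2) hb (by norm_num)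
    linarith [this]
  have hMloc : M ∈ L :=
    fine M hMpos hMnorm hMA hMB (le_of_eq hS1M) hS2M hS3M hS4M
      (by linarith [hS1M]) hT2M hT3M hT4M
  have hNloc : N ∈ L := subset_convexHull ℝ _ ⟨![1,0], ![0,0], hN⟩
  have hmem : lam ∈ {l : ℝ | l ∈ Set.Icc (0 : ℝ) 1 ∧ ∃ Pnoise ∈ L, (1 - l) • P + l • Pnoise ∈ L} :=
    ⟨⟨hl0, hl1⟩, N, hNloc, by rw [← hM]; exact hMloc⟩
  apply le_antisymm
  · exact csInf_le ⟨0, fun z hz => hz.1.1⟩ hmem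
  · apply le_csInf ⟨lam, hmem⟩
    rintro z ⟨⟨hz0, hz1⟩, Nz, hNzL, hMzL⟩
    have h1 := (chsh_mem_L_bounds _ hMzL).2
    have h2' := (chsh_mem_L_bounds _ hNzL).1
    have hlin : chsh ((1 - z) • P + z • Nz) = (1 - z) * chsh P + z * chsh Nz :=
      chsh_comb P Nz (1 - z) z
    rw [hlin] at h1
    rw [hlam, div_le_iff₀ h2]
    nlinarith [mul_nonneg hz0 (by linarith : (0:ℝ) ≤ chsh Nz + 2)]
end

section
/- Every quantum behaviour P ∈ Q in the (2,2,2,2) Bell scenario with ⟨A₁B₁⟩ = −1 satisfies the cubic inequality 2⟨A₀B₀⟩·⟨A₀B₁⟩·⟨A₁B₀⟩ + ⟨A₀B₀⟩² + ⟨A₀B₁⟩² + ⟨A₁B₀⟩² ≤ 1. -/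
open Matrix Kronecker ComplexOrder BigOperators

/-!
Write `A_x = E^x_0 - E^x_1` and `B_y = F^y_0 - F^y_1`. For the semi-inner product
`⟪X, Y⟫ = tr (Xᴴ Y ρ)` on operators, the vectors `A_x ⊗ 1` and `1 ⊗ B_y` lie in the unit ball
(because `A_x² ≤ 1`) and `⟨A_xB_y⟩ = ⟪A_x ⊗ 1, 1 ⊗ B_y⟫`. Three vectors `u, v, w` in the unit ball
satisfy `p² + q² + r² - 2pqr ≤ 1` for their pairwise inner products (a Gram determinant).
When `⟨A₁B₁⟩ = -1`, the vector `A₁ ⊗ 1` is `-(1 ⊗ B₁)` up to a null vector, so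
`⟪1 ⊗ B₀, 1 ⊗ B₁⟫ = -⟨A₁B₀⟩`, and `u = A₀ ⊗ 1`, `v = 1 ⊗ B₀`, `w = 1 ⊗ B₁` give the cubic
inequality.
The condition `⟨A₁B₁⟩ = -1` does not survive approximation by finite-dimensional realisations,
so one proves the bound with the error term `4 √(2 (1 + ⟨A₁B₁⟩))`, a closed condition on `P`.
-/

open scoped MatrixOrder InnerProductSpace

section Gram
open RealInnerProductSpace
variable {V : Type*} [SeminormedAddCommGroup V] [InnerProductSpace ℝ V]

theorem inner_cubic_le_one {u v w : V} (hu : ‖u‖ ≤ 1) (hv : ‖v‖ ≤ 1) (hw : ‖w‖ ≤ 1) :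
    ⟪u, v⟫ ^ 2 + ⟪u, w⟫ ^ 2 + ⟪v, w⟫ ^ 2 - 2 * (⟪u, v⟫ * ⟪u, w⟫ * ⟪v, w⟫) ≤ 1 := by
  set p := ⟪u, v⟫
  set q := ⟪u, w⟫
  set r := ⟪v, w⟫
  -- Raising the diagonal of the Gram matrix of `u, v, w` to `1` keeps it positive semidefinite.
  have hG : (!![1, p, q; p, 1, r; q, r, 1]).PosSemidef := by
    have hdiag : (diagonal fun i => 1 - ‖![u, v, w] i‖ ^ 2).PosSemidef := by
      refine posSemidef_diagonal_iff.2 fun i => sub_nonneg.2 (pow_le_one₀ (norm_nonneg _) ?_)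
      fin_cases i
      exacts [hu, hv, hw]
    have hsum : !![1, p, q; p, 1, r; q, r, 1]
        = gram ℝ ![u, v, w] + diagonal fun i => 1 - ‖![u, v, w] i‖ ^ 2 := by
      ext i j
      fin_cases i <;> fin_cases j <;> simp [p, q, r, real_inner_comm]
    rw [hsum]
    exact (posSemidef_gram ℝ _).add hdiag
  have hdet :
      (!![1, p, q; p, 1, r; q, r, 1]).det = 1 - p ^ 2 - q ^ 2 - r ^ 2 + 2 * (p * q * r) := by
    simp only [det_fin_three, of_apply, cons_val', cons_val_zero, cons_val_fin_one, cons_val_one,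
      cons_val, mul_one, one_mul]
    ring
  linarith [hG.det_nonneg]

theorem inner_cubic_le_of_anticorrelated {u v z w : V} (hu : ‖u‖ ≤ 1) (hv : ‖v‖ ≤ 1)
    (hz : ‖z‖ ≤ 1) (hw : ‖w‖ ≤ 1) :
    ⟪u, v⟫ ^ 2 + ⟪u, w⟫ ^ 2 + ⟪z, v⟫ ^ 2 + 2 * (⟪u, v⟫ * ⟪u, w⟫ * ⟪z, v⟫)
      ≤ 1 + 4 * √(2 * (1 + ⟪z, w⟫)) := by
  have hbound : ∀ {x y : V}, ‖x‖ ≤ 1 → ‖y‖ ≤ 1 → |⟪x, y⟫| ≤ 1 := fun hx hy =>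
    (abs_real_inner_le_norm _ _).trans (mul_le_one₀ hx (norm_nonneg _) hy)
  set p := ⟪u, v⟫
  set q := ⟪u, w⟫
  set c := ⟪z, v⟫
  set r := ⟪v, w⟫
  -- `r ≈ -c` up to `δ`, which is small when `z ≈ -w`.
  set δ := ⟪v, z + w⟫
  have hr : r = δ - c := by
    simp only [r, c, δ, inner_add_right, real_inner_comm z v]
    ring
  have hδ : |δ| ≤ √(2 * (1 + ⟪z, w⟫)) := calc
    |δ| ≤ ‖v‖ * ‖z + w‖ := abs_real_inner_le_norm _ _
    _ ≤ ‖z + w‖ := mul_le_of_le_one_left (norm_nonneg _) hv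
    _ = √(‖z‖ ^ 2 + 2 * ⟪z, w⟫ + ‖w‖ ^ 2) := by
      rw [← norm_add_sq_real, Real.sqrt_sq (norm_nonneg _)]
    _ ≤ √(2 * (1 + ⟪z, w⟫)) := Real.sqrt_le_sqrt (by nlinarith [norm_nonneg z, norm_nonneg w])
  have hfactor : |r - c - 2 * (p * q)| ≤ 4 := by
    have hp := abs_le.1 (hbound hu hv)
    have hq := abs_le.1 (hbound hu hw)
    have hc := abs_le.1 (hbound hz hv)
    have hr' := abs_le.1 (hbound hv hw)
    rw [abs_le]
    constructor <;> nlinarith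
  calc p ^ 2 + q ^ 2 + c ^ 2 + 2 * (p * q * c)
      = (p ^ 2 + q ^ 2 + r ^ 2 - 2 * (p * q * r)) - δ * (r - c - 2 * (p * q)) := by
        rw [hr]; ring
    _ ≤ 1 + |δ| * |r - c - 2 * (p * q)| := by
        rw [← abs_mul]
        linarith [inner_cubic_le_one hu hv hw, neg_abs_le (δ * (r - c - 2 * (p * q)))]
    _ ≤ 1 + 4 * √(2 * (1 + ⟪z, w⟫)) := by
        linarith [mul_le_mul hδ hfactor (abs_nonneg _) (Real.sqrt_nonneg _)]
end Gram

section Matrix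
variable {𝕜 n m : Type*} [RCLike 𝕜] [Fintype n] [DecidableEq n] [Fintype m] [DecidableEq m]

theorem exists_conjTranspose_mul_add_eq_one {E : Fin 2 → Matrix n n 𝕜}
    (hE : ∀ a, (E a).PosSemidef) (hsum : ∑ a, E a = 1) :
    ∃ D : Matrix n n 𝕜, (E 0 - E 1)ᴴ * (E 0 - E 1) + Dᴴ * D = 1 := by
  set G₀ := CFC.sqrt (E 0)
  set G₁ := CFC.sqrt (E 1)
  have hG₀ : G₀ * G₀ = E 0 := CFC.sqrt_mul_sqrt_self _ (hE 0).nonneg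
  have hG₁ : G₁ * G₁ = E 1 := CFC.sqrt_mul_sqrt_self _ (hE 1).nonneg
  have hG₀H : G₀ᴴ = G₀ := (CFC.sqrt_nonneg (E 0)).posSemidef.isHermitian
  have hG₁H : G₁ᴴ = G₁ := (CFC.sqrt_nonneg (E 1)).posSemidef.isHermitian
  have hE₁ : E 1 = 1 - E 0 := by rw [← hsum, Fin.sum_univ_two]; abel
  -- `1 - (E₀ - E₁)² = 4 E₀ E₁ = (2 G₁ G₀)ᴴ (2 G₁ G₀)` since `E₀` and `E₁ = 1 - E₀` commute.
  refine ⟨G₁ * G₀ + G₁ * G₀, ?_⟩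
  simp only [conjTranspose_add, conjTranspose_mul, conjTranspose_sub, hG₀H, hG₁H,
    (hE 0).isHermitian.eq, (hE 1).isHermitian.eq]
  have hD : (G₀ * G₁ + G₀ * G₁) * (G₁ * G₀ + G₁ * G₀) = 4 • (G₀ * (G₁ * G₁) * G₀) := by
    noncomm_ring
  rw [hD, hG₁, hE₁, ← hG₀]
  noncomm_ring

theorem kronecker_one_conjTranspose_mul_add_eq_one {X Y : Matrix n n 𝕜}
    (h : Xᴴ * X + Yᴴ * Y = 1) :
    (X ⊗ₖ (1 : Matrix m m 𝕜))ᴴ * (X ⊗ₖ 1) + (Y ⊗ₖ (1 : Matrix m m 𝕜))ᴴ * (Y ⊗ₖ 1) = 1 := by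
  simp only [conjTranspose_kronecker, ← mul_kronecker_mul, conjTranspose_one, one_mul,
    ← add_kronecker, h, one_kronecker_one]

theorem one_kronecker_conjTranspose_mul_add_eq_one {X Y : Matrix n n 𝕜}
    (h : Xᴴ * X + Yᴴ * Y = 1) :
    ((1 : Matrix m m 𝕜) ⊗ₖ X)ᴴ * (1 ⊗ₖ X) + ((1 : Matrix m m 𝕜) ⊗ₖ Y)ᴴ * (1 ⊗ₖ Y) = 1 := by
  simp only [conjTranspose_kronecker, ← mul_kronecker_mul, conjTranspose_one, one_mul,
    ← kronecker_add, h, one_kronecker_one]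

theorem trace_one_kronecker_mul_mul_conjTranspose (A : Matrix n n 𝕜) (B : Matrix m m 𝕜)
    (ρ : Matrix (n × m) (n × m) 𝕜) :
    ((1 ⊗ₖ B) * ρ * (A ⊗ₖ 1)ᴴ).trace = ((Aᴴ ⊗ₖ B) * ρ).trace := by
  rw [trace_mul_comm, ← Matrix.mul_assoc, conjTranspose_kronecker, conjTranspose_one,
    ← mul_kronecker_mul, Matrix.mul_one, Matrix.one_mul]

theorem re_trace_mul_mul_conjTranspose_le_one {ρ X Y : Matrix n n 𝕜} (hρ : ρ.PosSemidef)
    (htr : ρ.trace = 1) (h : Xᴴ * X + Yᴴ * Y = 1) :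
    RCLike.re (X * ρ * Xᴴ).trace ≤ 1 := by
  have hsum : (X * ρ * Xᴴ).trace + (Y * ρ * Yᴴ).trace = 1 := by
    rw [trace_mul_cycle, trace_mul_cycle (C := Yᴴ), ← trace_add, ← Matrix.add_mul, h,
      Matrix.one_mul, htr]
  have hY : 0 ≤ RCLike.re (Y * ρ * Yᴴ).trace :=
    RCLike.nonneg_iff.1 (hρ.mul_mul_conjTranspose_same Y).trace_nonneg |>.1
  have := congrArg RCLike.re hsum
  rw [map_add, RCLike.one_re] at this
  linarith

end Matrix

theorem corr_eq_trace {n m : Type*} [Fintype n] [Fintype m] {P : Behaviour} {x y : Fin 2}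
    {ρ : Matrix (n × m) (n × m) ℂ} {E : Fin 2 → Matrix n n ℂ} {F : Fin 2 → Matrix m m ℂ}
    (hP : ∀ a b, (P a b x y : ℂ) = ((E a ⊗ₖ F b) * ρ).trace) :
    (corr P x y : ℂ) = (((E 0 - E 1) ⊗ₖ (F 0 - F 1)) * ρ).trace := by
  have hk : (E 0 - E 1) ⊗ₖ (F 0 - F 1)
      = E 0 ⊗ₖ F 0 - E 0 ⊗ₖ F 1 - (E 1 ⊗ₖ F 0 - E 1 ⊗ₖ F 1) := by
    ext ⟨i, j⟩ ⟨k, l⟩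
    simp only [kronecker_apply, Matrix.sub_apply]
    ring
  rw [hk]
  simp only [corr, Fin.sum_univ_two, Fin.val_zero, Fin.val_one, Matrix.sub_mul, trace_sub, ← hP]
  push_cast
  ring

theorem cubic_le_of_mem_Qfinite {P : Behaviour} (hP : P ∈ Qfinite) :
    2 * (corr P 0 0 * corr P 0 1 * corr P 1 0) + corr P 0 0 ^ 2 + corr P 0 1 ^ 2 + corr P 1 0 ^ 2
      ≤ 1 + 4 * √(2 * (1 + corr P 1 1)) := by
  obtain ⟨d, -, ρ, E, F, hρ, htr, hE, hF, hEsum, hFsum, hPρ⟩ := hP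
  set A : Fin 2 → Matrix (Fin d) (Fin d) ℂ := fun x => E x 0 - E x 1
  set B : Fin 2 → Matrix (Fin d) (Fin d) ℂ := fun y => F y 0 - F y 1
  -- The semi-inner product `⟪X, Y⟫ = tr (Y ρ Xᴴ) = tr (Xᴴ Y ρ)` induced by the state.
  let := ρ.toMatrixSeminormedAddCommGroup hρ
  let := ρ.toMatrixInnerProductSpace hρ
  let : InnerProductSpace ℝ (Matrix (Fin d × Fin d) (Fin d × Fin d) ℂ) :=
    InnerProductSpace.complexToReal
  have hnorm : ∀ X Y : Matrix (Fin d × Fin d) (Fin d × Fin d) ℂ,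
      Xᴴ * X + Yᴴ * Y = 1 → ‖X‖ ≤ 1 := by
    intro X Y h
    have : ‖X‖ ^ 2 ≤ 1 := by
      rw [@norm_sq_eq_re_inner ℂ]
      exact re_trace_mul_mul_conjTranspose_le_one hρ htr h
    exact (sq_le_one_iff₀ (norm_nonneg _)).1 this
  have hA : ∀ x, ‖A x ⊗ₖ (1 : Matrix (Fin d) (Fin d) ℂ)‖ ≤ 1 := fun x =>
    let ⟨_, hD⟩ := exists_conjTranspose_mul_add_eq_one (hE x) (hEsum x)
    hnorm _ _ (kronecker_one_conjTranspose_mul_add_eq_one hD)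
  have hB : ∀ y, ‖(1 : Matrix (Fin d) (Fin d) ℂ) ⊗ₖ B y‖ ≤ 1 := fun y =>
    let ⟨_, hD⟩ := exists_conjTranspose_mul_add_eq_one (hF y) (hFsum y)
    hnorm _ _ (one_kronecker_conjTranspose_mul_add_eq_one hD)
  have hcorr : ∀ x y, ⟪A x ⊗ₖ 1, 1 ⊗ₖ B y⟫_ℝ = corr P x y := by
    intro x y
    change RCLike.re ((1 ⊗ₖ B y) * ρ * (A x ⊗ₖ 1)ᴴ).trace = corr P x y
    rw [trace_one_kronecker_mul_mul_conjTranspose,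
      ((hE x 0).isHermitian.sub (hE x 1).isHermitian).eq, ← corr_eq_trace (hPρ · · x y)]
    exact Complex.ofReal_re _
  have := inner_cubic_le_of_anticorrelated (hA 0) (hB 0) (hA 1) (hB 1)
  rw [hcorr, hcorr, hcorr, hcorr] at this
  linarith

@[fun_prop]
theorem continuous_corr (x y : Fin 2) : Continuous fun P : Behaviour => corr P x y := by
  unfold corr
  fun_prop

theorem Q_subset_setOf_cubic_le : Q ⊆ {P | 2 * (corr P 0 0 * corr P 0 1 * corr P 1 0)
    + corr P 0 0 ^ 2 + corr P 0 1 ^ 2 + corr P 1 0 ^ 2 ≤ 1 + 4 * √(2 * (1 + corr P 1 1))} :=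
  closure_minimal (fun _ => cubic_le_of_mem_Qfinite) (isClosed_le (by fun_prop) (by fun_prop))

/-- Every quantum behaviour with `⟨A₁B₁⟩ = −1` satisfies the cubic constraint
`2⟨A₀B₀⟩⟨A₀B₁⟩⟨A₁B₀⟩ + ⟨A₀B₀⟩² + ⟨A₀B₁⟩² + ⟨A₁B₀⟩² ≤ 1`. -/
theorem cubic_constraint (P : Behaviour) (hP : P ∈ Q) (h11 : corr P 1 1 = -1) :
    2 * (corr P 0 0 * corr P 0 1 * corr P 1 0)
      + corr P 0 0 ^ 2 + corr P 0 1 ^ 2 + corr P 1 0 ^ 2 ≤ 1 := by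
  simpa [h11] using Q_subset_setOf_cubic_le hP
end

section
/- Let P_NE be the behaviour in the (2,2,2,2) Bell scenario with ⟨A_x⟩ = ⟨B_y⟩ = 0 for all x,y, ⟨A₀B₀⟩ = ⟨A₀B₁⟩ = ⟨A₁B₀⟩ = 1/2 and ⟨A₁B₁⟩ = −1 (probabilities recovered via P(ab|xy) = (1 + (−1)^a⟨A_x⟩ + (−1)^b⟨B_y⟩ + (−1)^{a+b}⟨A_xB_y⟩)/4). Then P_NE ∈ Q, but P_NE is not an exposed point of Q: there is no Bell function B ∈ ℝ^16 such that {P ∈ Q : B·P = max_{P'∈Q} B·P'} = {P_NE}. -/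
open Matrix Kronecker ComplexOrder BigOperators

/-- The non-exposed point `P_NE`: zero marginals,
`⟨A₀B₀⟩ = ⟨A₀B₁⟩ = ⟨A₁B₀⟩ = 1/2` and `⟨A₁B₁⟩ = −1`. -/
noncomputable def PNE : Behaviour :=
  fromCorr (fun _ => 0) (fun _ => 0) ![![1 / 2, 1 / 2], ![1 / 2, -1]]

/-!
`P_NE` is the singlet behaviour in which Alice measures in the real orthonormal bases at
angles `(π/6, -π/2)` and Bob in those at `(-π/6, π/2)`. Deforming the angles to `(t, -3t)` and
`(-t, 3t)` gives a curve of quantum behaviours with zero marginals and correlators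
`(-cos 4t, -cos 4t, -cos 4t, -cos 12t)`, through `P_NE` at `t = π/6`. On zero-marginal
behaviours a Bell functional is affine in the correlators, with weights `w_xy`, so along the
curve it equals `k - (w₀₀ + w₀₁ + w₁₀) cos 4t - w₁₁ cos 12t`. If it is maximised over `Q` at
`P_NE`, its derivative `2√3 (w₀₀ + w₀₁ + w₁₀)` at `π/6` vanishes; but then the point `t = 0` of
the curve, where all correlators are `-1`, attains the same value, so the maximiser is not
unique.
-/

open Real

open scoped MatrixOrder in
theorem Matrix.PosSemidef.trace_mul_nonneg {𝕜 n : Type*} [RCLike 𝕜] [Fintype n]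
    {A B : Matrix n n 𝕜} (hA : A.PosSemidef) (hB : B.PosSemidef) : 0 ≤ (A * B).trace := by
  classical
  obtain ⟨C, rfl⟩ := CStarAlgebra.nonneg_iff_eq_star_mul_self.mp hB.nonneg
  rw [star_eq_conjTranspose, ← Matrix.mul_assoc, trace_mul_comm, ← Matrix.mul_assoc]
  exact (hA.mul_mul_conjTranspose_same C).trace_nonneg

lemma sum_sum_trace_kronecker_mul {α m n : Type*} [CommSemiring α] [Fintype m] [Fintype n]
    [DecidableEq m] [DecidableEq n] {ρ : Matrix (m × n) (m × n) α}
    {E : Fin 2 → Matrix m m α} {F : Fin 2 → Matrix n n α}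
    (hE : ∑ a, E a = 1) (hF : ∑ b, F b = 1) :
    ∑ a, ∑ b, ((E a ⊗ₖ F b) * ρ).trace = ρ.trace :=
  calc ∑ a, ∑ b, ((E a ⊗ₖ F b) * ρ).trace = (((∑ a, E a) ⊗ₖ ∑ b, F b) * ρ).trace := by
        simp only [Fin.sum_univ_two, add_kronecker, kronecker_add, add_mul, trace_add]
        abel
    _ = ρ.trace := by rw [hE, hF, one_kronecker_one, Matrix.one_mul]

lemma Qfinite_subset_Icc : Qfinite ⊆ Set.Icc 0 1 := by
  rintro P ⟨d, -, ρ, E, F, hρ, hρ_trace, hE, hF, hE_sum, hF_sum, hP⟩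
  have hnonneg : 0 ≤ P := fun a b x y => by
    exact_mod_cast (hP a b x y).symm ▸
      ((hE x a).kronecker (hF y b)).trace_mul_nonneg hρ
  refine ⟨hnonneg, fun a b x y => ?_⟩
  have hsum : ∑ a, ∑ b, P a b x y = 1 := by
    have h : ∑ a, ∑ b, (P a b x y : ℂ) = 1 := by
      simp_rw [hP]
      rw [sum_sum_trace_kronecker_mul (hE_sum x) (hF_sum y), hρ_trace]
    exact_mod_cast h
  calc P a b x y ≤ ∑ b, P a b x y :=
        Finset.single_le_sum (fun b _ => hnonneg a b x y) (Finset.mem_univ b)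
    _ ≤ ∑ a, ∑ b, P a b x y :=
        Finset.single_le_sum (f := fun a => ∑ b, P a b x y)
          (fun a _ => Finset.sum_nonneg fun b _ => hnonneg a b x y) (Finset.mem_univ a)
    _ = 1 := hsum

lemma isCompact_Q : IsCompact Q :=
  isCompact_Icc.of_isClosed_subset isClosed_closure
    (closure_minimal Qfinite_subset_Icc isClosed_Icc)

lemma bell_le_sSup {B P : Behaviour} (hP : P ∈ Q) : bell B P ≤ sSup (bell B '' Q) :=
  le_csSup (isCompact_Q.bddAbove_image (by unfold bell; fun_prop)) ⟨P, hP, rfl⟩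

noncomputable def ofRealVecMulVec {n : Type*} (u : n → ℝ) : Matrix n n ℂ :=
  vecMulVec (fun i => (u i : ℂ)) (fun i => (u i : ℂ))

lemma ofRealVecMulVec_posSemidef {n : Type*} [Fintype n] (u : n → ℝ) :
    (ofRealVecMulVec u).PosSemidef := by
  have hu : star (fun i => (u i : ℂ)) = fun i => (u i : ℂ) := by
    funext i
    simp [Complex.conj_ofReal]
  unfold ofRealVecMulVec
  nth_rewrite 2 [← hu]
  exact posSemidef_vecMulVec_self_star _

noncomputable def lineProj (γ : ℝ) : Matrix (Fin 2) (Fin 2) ℂ :=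
  ofRealVecMulVec ![Real.cos γ, Real.sin γ]

lemma lineProj_add_lineProj_add_pi_div_two (γ : ℝ) :
    lineProj γ + lineProj (γ + π / 2) = 1 := by
  ext i j
  fin_cases i <;> fin_cases j <;>
    simp [lineProj, ofRealVecMulVec, vecMulVec_apply, Real.cos_add_pi_div_two,
      Real.sin_add_pi_div_two] <;>
    first | linear_combination Complex.cos_sq_add_sin_sq (γ : ℂ) | ring

/-- `(|01⟩ - |10⟩)(⟨01| - ⟨10|) / 2`. -/
noncomputable def singletState : Matrix (Fin 2 × Fin 2) (Fin 2 × Fin 2) ℂ :=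
  (1 / 2 : ℂ) • ofRealVecMulVec fun p => ![![0, 1], ![-1, 0]] p.1 p.2

lemma singletState_posSemidef : singletState.PosSemidef :=
  (ofRealVecMulVec_posSemidef _).smul (by positivity)

lemma singletState_trace : singletState.trace = 1 := by
  simp [singletState, ofRealVecMulVec, vecMulVec_apply, trace, Fintype.sum_prod_type]
  norm_num

lemma trace_lineProj_kronecker_mul_singletState (γ δ : ℝ) :
    ((lineProj γ ⊗ₖ lineProj δ) * singletState).trace =
      ((1 - Real.cos (2 * (γ - δ))) / 4 : ℝ) := by
  rw [show (1 - Real.cos (2 * (γ - δ))) / 4 = Real.sin (γ - δ) ^ 2 / 2 by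
    rw [Real.sin_sq_eq_half_sub]; ring, Real.sin_sub]
  simp [singletState, lineProj, ofRealVecMulVec, vecMulVec_apply, trace, Fintype.sum_prod_type,
    Matrix.mul_apply]
  ring

noncomputable def singletBehaviour (α β : Fin 2 → ℝ) : Behaviour :=
  fromCorr (fun _ => 0) (fun _ => 0) fun x y => -Real.cos (2 * (α x - β y))

lemma hasRealisation_singletBehaviour (α β : Fin 2 → ℝ) :
    HasRealisation 2 (singletBehaviour α β) := by
  have hsum (γ : Fin 2 → ℝ) (x : Fin 2) :
      ∑ a : Fin 2, lineProj (γ x + a * (π / 2)) = 1 := by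
    simpa [Fin.sum_univ_two] using lineProj_add_lineProj_add_pi_div_two (γ x)
  refine ⟨singletState, fun x a => lineProj (α x + a * (π / 2)),
    fun y b => lineProj (β y + b * (π / 2)), singletState_posSemidef, singletState_trace,
    fun _ _ => ofRealVecMulVec_posSemidef _, fun _ _ => ofRealVecMulVec_posSemidef _,
    hsum α, hsum β, fun a b x y => ?_⟩
  rw [trace_lineProj_kronecker_mul_singletState, Complex.ofReal_inj,
    show 2 * (α x + a * (π / 2) - (β y + b * (π / 2))) = 2 * (α x - β y) + (a - b) * π by
      ring]
  fin_cases a <;> fin_cases b <;>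
    simp [singletBehaviour, fromCorr, Real.cos_add_pi, ← sub_eq_add_neg, Real.cos_sub_pi]

lemma singletBehaviour_mem_Q (α β : Fin 2 → ℝ) : singletBehaviour α β ∈ Q :=
  subset_closure ⟨2, two_pos, hasRealisation_singletBehaviour α β⟩

noncomputable def corrWeight (B : Behaviour) (x y : Fin 2) : ℝ :=
  (∑ a : Fin 2, ∑ b : Fin 2, (-1 : ℝ) ^ ((a : ℕ) + (b : ℕ)) * B a b x y) / 4

lemma bell_fromCorr_zero_zero (B : Behaviour) (c : Fin 2 → Fin 2 → ℝ) :
    bell B (fromCorr (fun _ => 0) (fun _ => 0) c) =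
      bell B (fromCorr (fun _ => 0) (fun _ => 0) fun _ _ => 0) +
        ∑ x, ∑ y, corrWeight B x y * c x y := by
  simp only [bell, fromCorr, corrWeight, Fin.sum_univ_two]
  norm_num
  ring

noncomputable def pneCurve (t : ℝ) : Behaviour := singletBehaviour ![t, -3 * t] ![-t, 3 * t]

lemma pneCurve_eq_fromCorr (t : ℝ) :
    pneCurve t = fromCorr (fun _ => 0) (fun _ => 0)
      ![![-Real.cos (4 * t), -Real.cos (4 * t)], ![-Real.cos (4 * t), -Real.cos (12 * t)]] := by
  unfold pneCurve singletBehaviour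
  congr
  funext x y
  fin_cases x <;> fin_cases y <;> simp <;>
    first | (congr 1; ring1) | (rw [← Real.cos_neg]; congr 1; ring1)

lemma pneCurve_pi_div_six : pneCurve (π / 6) = PNE := by
  rw [pneCurve_eq_fromCorr, PNE, show 4 * (π / 6) = π - π / 3 by ring,
    show 12 * (π / 6) = 2 * π by ring, Real.cos_pi_sub, Real.cos_pi_div_three, Real.cos_two_pi]
  norm_num

lemma pneCurve_zero_ne_PNE : pneCurve 0 ≠ PNE := by
  intro h
  have h0 := congrFun (congrFun (congrFun (congrFun h 0) 0) 0) 0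
  norm_num [pneCurve_eq_fromCorr, PNE, fromCorr] at h0

lemma bell_pneCurve (B : Behaviour) (t : ℝ) :
    bell B (pneCurve t) = bell B (fromCorr (fun _ => 0) (fun _ => 0) fun _ _ => 0)
      - (corrWeight B 0 0 + corrWeight B 0 1 + corrWeight B 1 0) * Real.cos (4 * t)
      - corrWeight B 1 1 * Real.cos (12 * t) := by
  rw [pneCurve_eq_fromCorr, bell_fromCorr_zero_zero]
  simp only [Fin.sum_univ_two, Matrix.cons_val_zero, Matrix.cons_val_one]
  ring

lemma hasDerivAt_bell_pneCurve (B : Behaviour) :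
    HasDerivAt (fun t => bell B (pneCurve t))
      (2 * √3 * (corrWeight B 0 0 + corrWeight B 0 1 + corrWeight B 1 0)) (π / 6) := by
  have hcos (c : ℝ) :
      HasDerivAt (fun t => Real.cos (c * t)) (-Real.sin (c * (π / 6)) * c) (π / 6) := by
    simpa using ((hasDerivAt_id' (π / 6)).const_mul c).cos
  simp_rw [bell_pneCurve]
  refine (((hcos 4).const_mul _).const_sub _ |>.sub ((hcos 12).const_mul _)).congr_deriv ?_
  rw [show 4 * (π / 6) = π - π / 3 by ring, show 12 * (π / 6) = 2 * π by ring,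
    Real.sin_pi_sub, Real.sin_pi_div_three, Real.sin_two_pi]
  ring

/-- **`P_NE` is a quantum behaviour but not an exposed point of `Q`:** no Bell
function has `P_NE` as its unique maximiser over the quantum set. -/
theorem pne_quantum_not_exposed :
    PNE ∈ Q ∧
    ¬ ∃ B : Behaviour, {P ∈ Q | bell B P = sSup (bell B '' Q)} = {PNE} := by
  have hcurve (t : ℝ) : pneCurve t ∈ Q := singletBehaviour_mem_Q _ _
  refine ⟨pneCurve_pi_div_six ▸ hcurve _, ?_⟩
  rintro ⟨B, hB⟩
  have hPNE : bell B PNE = sSup (bell B '' Q) := (hB.ge (Set.mem_singleton PNE)).2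
  have hmax : IsMaxOn (fun t => bell B (pneCurve t)) Set.univ (π / 6) := fun t _ => by
    simpa [pneCurve_pi_div_six, hPNE] using bell_le_sSup (hcurve t)
  have hweights : corrWeight B 0 0 + corrWeight B 0 1 + corrWeight B 1 0 = 0 := by
    simpa using (hmax.isLocalMax Filter.univ_mem).hasDerivAt_eq_zero (hasDerivAt_bell_pneCurve B)
  have h0 : pneCurve 0 ∈ {P ∈ Q | bell B P = sSup (bell B '' Q)} := by
    refine ⟨hcurve 0, ?_⟩
    rw [← hPNE, ← pneCurve_pi_div_six, bell_pneCurve, bell_pneCurve, hweights,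
      show 12 * (π / 6) = 2 * π by ring, Real.cos_two_pi]
    simp
  exact pneCurve_zero_ne_PNE (hB.le h0)
end
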